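/- Let m, n ≥ 2 and let G be the ordered graph on vertices v_1, ..., v_{m+n} whose only edges are v_1 v_{m+n} and v_m v_{m+1}. Then every 2-coloring of the edges of the complete graph on the linearly ordered vertex set {1, ..., 2m+2n-2} contains a monochromatic ordered copy of G. -/
import Mathlib


/-- A `t`-edge-coloring `c` of the complete graph on the ordered vertex set `Fin N`
contains a monochromatic ordered copy of the ordered graph `G` on `Fin M`. -/
def HasMonoCopy {M N t : ℕ} (G : SimpleGraph (Fin M)) (c : Fin N → Fin N → Fin t) : Prop :=
  ∃ k : Fin t, ∃ f : Fin M → Fin N, StrictMono f ∧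
    ∀ u v : Fin M, u < v → G.Adj u v → c (f u) (f v) = k

/-- The `t`-color ordered Ramsey number of the ordered graph `G`: the least `N` such that
every `t`-coloring of the edges of the complete graph on `Fin N` contains a monochromatic
ordered copy of `G`. -/
noncomputable def orderedRamsey {M : ℕ} (t : ℕ) (G : SimpleGraph (Fin M)) : ℕ :=
  sInf {N : ℕ | ∀ c : Fin N → Fin N → Fin t, HasMonoCopy G c}

/-- An interval coloring of an ordered graph with `k` parts, encoded as a monotone
surjection onto `Fin k` whose fibers (the parts, which are intervals of consecutive
vertices) are independent sets. -/
def IsIntervalColoring {N k : ℕ} (G : SimpleGraph (Fin N)) (p : Fin N → Fin k) : Prop :=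
  Monotone p ∧ Function.Surjective p ∧ ∀ u v : Fin N, G.Adj u v → p u ≠ p v

/-- The interval chromatic number of an ordered graph. -/
noncomputable def intervalChromatic {N : ℕ} (G : SimpleGraph (Fin N)) : ℕ :=
  sInf {k : ℕ | ∃ p : Fin N → Fin k, IsIntervalColoring G p}

/-- If `G` is the ordered graph on `v_1,…,v_{m+n}` whose only edges are `v_1 v_{m+n}`
and `v_m v_{m+1}`, then every 2-coloring of the edges of the complete graph on the
ordered vertex set `{1,…,2m+2n-2}` contains a monochromatic ordered copy of `G`. -/
theorem stmt4 {m n : ℕ} (hm : 2 ≤ m) (hn : 2 ≤ n)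
    (G : SimpleGraph (Fin (m + n)))
    (hG : G = SimpleGraph.fromEdgeSet
      {s((⟨0, by omega⟩ : Fin (m + n)), (⟨m + n - 1, by omega⟩ : Fin (m + n))),
       s((⟨m - 1, by omega⟩ : Fin (m + n)), (⟨m, by omega⟩ : Fin (m + n)))}) :
    ∀ c : Fin (2 * m + 2 * n - 2) → Fin (2 * m + 2 * n - 2) → Fin 2,
      HasMonoCopy G c := by
  subst hG
  intro c
  have key : ∀ f : Fin (m + n) → Fin (2 * m + 2 * n - 2), StrictMono f →
      c (f ⟨0, by omega⟩) (f ⟨m + n - 1, by omega⟩) = c (f ⟨m - 1, by omega⟩) (f ⟨m, by omega⟩) →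
      HasMonoCopy (SimpleGraph.fromEdgeSet
        {s((⟨0, by omega⟩ : Fin (m + n)), (⟨m + n - 1, by omega⟩ : Fin (m + n))),
         s((⟨m - 1, by omega⟩ : Fin (m + n)), (⟨m, by omega⟩ : Fin (m + n)))}) c := by
    intro f hf hcc
    refine ⟨c (f ⟨m - 1, by omega⟩) (f ⟨m, by omega⟩), f, hf, ?_⟩
    intro u v huv hadj
    rw [SimpleGraph.fromEdgeSet_adj] at hadj
    obtain ⟨hmem, hne⟩ := hadj
    simp only [Set.mem_insert_iff, Set.mem_singleton_iff, Sym2.eq_iff] at hmem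
    rw [Fin.lt_def] at huv
    rcases hmem with (⟨h1, h2⟩ | ⟨h1, h2⟩) | (⟨h1, h2⟩ | ⟨h1, h2⟩)
    · subst h1; subst h2; exact hcc
    · exfalso; subst h1; subst h2; simp only [] at huv; omega
    · subst h1; subst h2; rfl
    · exfalso; subst h1; subst h2; simp only [] at huv; omega
  by_cases h1 : c ⟨m - 1, by omega⟩ ⟨2 * m + n - 2, by omega⟩
      = c ⟨2 * m - 2, by omega⟩ ⟨2 * m - 1, by omega⟩
  · refine key (fun x => ⟨x.1 + (m - 1), by have := x.2; omega⟩) ?_ ?_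
    · intro x y h
      rw [Fin.lt_def] at h ⊢
      simp only
      omega
    · convert h1 using 2 <;> first | rfl | exact Fin.ext (by simp; omega) | exact Fin.ext (by simp)
  · by_cases h2 : c ⟨0, by omega⟩ ⟨2 * m + 2 * n - 3, by omega⟩
        = c ⟨m - 1, by omega⟩ ⟨2 * m + n - 2, by omega⟩
    · refine key (fun x => ⟨if x.1 < m then x.1 else x.1 + (m + n - 2),
        by have := x.2; split <;> omega⟩) ?_ ?_
      · intro x y h
        rw [Fin.lt_def] at h ⊢
        simp only
        split_ifs <;> omega
      · convert h2 using 2 <;> exact Fin.ext (by simp only; split <;> omega)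
    · have hAB : c ⟨0, by omega⟩ ⟨2 * m + 2 * n - 3, by omega⟩
          = c ⟨2 * m - 2, by omega⟩ ⟨2 * m - 1, by omega⟩ := by
        apply Fin.ext
        have e1 : (c ⟨m - 1, by omega⟩ ⟨2 * m + n - 2, by omega⟩).1
            ≠ (c ⟨2 * m - 2, by omega⟩ ⟨2 * m - 1, by omega⟩).1 :=
          fun h => h1 (Fin.ext h)
        have e2 : (c ⟨0, by omega⟩ ⟨2 * m + 2 * n - 3, by omega⟩).1
            ≠ (c ⟨m - 1, by omega⟩ ⟨2 * m + n - 2, by omega⟩).1 :=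
          fun h => h2 (Fin.ext h)
        have b1 := (c ⟨0, by omega⟩ ⟨2 * m + 2 * n - 3, by omega⟩).2
        have b2 := (c ⟨m - 1, by omega⟩ ⟨2 * m + n - 2, by omega⟩).2
        have b3 := (c ⟨2 * m - 2, by omega⟩ ⟨2 * m - 1, by omega⟩).2
        omega
      refine key (fun x => ⟨if x.1 < m then 2 * x.1 else 2 * x.1 - 1,
        by have := x.2; split <;> omega⟩) ?_ ?_
      · intro x y h
        rw [Fin.lt_def] at h ⊢
        simp only
        split_ifs <;> omega
      · convert hAB using 2 <;> exact Fin.ext (by simp only; split <;> omega)
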